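/- arXiv:2602.23884 — 2 statements merged into one kernel-verified Lean document; each statement's English description precedes it below -/
import Mathlib

section
/- Let G and H be finite simple graphs with G connected. If S is a distance-equalizer set of the corona product G⊙H, then: (i) L(S) is a vertex cover of the empty bisector graph Ĝ; (ii) U(S) is a vertex cover of Ĝ; and (iii) L(S) ∪ U(S) = V(G). -/
universe u v

variable {V : Type u} {W : Type v}

/-- A distance-equalizer set of a graph: for every pair of distinct vertices outside `S`
there is a vertex of `S` equidistant to both. -/
def IsDistEqSet {α : Type*} (G : SimpleGraph α) (S : Set α) : Prop :=
  ∀ ⦃x y : α⦄, x ∉ S → y ∉ S → x ≠ y → ∃ w ∈ S, G.dist w x = G.dist w y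

/-- The equidistant dimension of a graph: the minimum cardinality of a distance-equalizer set. -/
noncomputable def eqdim {α : Type*} (G : SimpleGraph α) : ℕ :=
  sInf {n | ∃ S : Set α, IsDistEqSet G S ∧ S.ncard = n}

/-- The bisector of two vertices: vertices equidistant to both. -/
def bisector {α : Type*} (G : SimpleGraph α) (x y : α) : Set α :=
  {w | G.dist w x = G.dist w y}

/-- The empty bisector graph of `G`: two distinct vertices are adjacent iff their bisector
in `G` is empty. -/
def emptyBisector {α : Type*} (G : SimpleGraph α) : SimpleGraph α where
  Adj x y := x ≠ y ∧ bisector G x y = ∅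
  symm := ⟨by
    rintro x y ⟨h1, h2⟩
    refine ⟨h1.symm, Set.eq_empty_iff_forall_notMem.mpr fun w hw => ?_⟩
    exact Set.eq_empty_iff_forall_notMem.mp h2 w
      ((show G.dist w y = G.dist w x from hw).symm)⟩
  loopless := ⟨fun _ h => h.1 rfl⟩

/-- A vertex cover of a graph: a set of vertices meeting every edge. -/
def IsVertexCover {α : Type*} (G : SimpleGraph α) (C : Set α) : Prop :=
  ∀ ⦃x y : α⦄, G.Adj x y → x ∈ C ∨ y ∈ C

/-- An independent set of a graph: a set of pairwise non-adjacent vertices. -/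
def IsIndepSet {α : Type*} (G : SimpleGraph α) (A : Set α) : Prop :=
  ∀ ⦃x y : α⦄, x ∈ A → y ∈ A → ¬ G.Adj x y

/-- The vertex cover number `β(G)`. -/
noncomputable def vcNum {α : Type*} (G : SimpleGraph α) : ℕ :=
  sInf {n | ∃ C : Set α, IsVertexCover G C ∧ C.ncard = n}

/-- The independence number `α(G)`. -/
noncomputable def indepNum {α : Type*} (G : SimpleGraph α) : ℕ :=
  sSup {n | ∃ A : Set α, IsIndepSet G A ∧ A.ncard = n}

/-- A forward-equalized pair `(X, Y)` of `G`: `X ∪ Y = V(G)` and for every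
`a ∈ X \ Y` and `b ∈ Y \ X` there is `w` with `d(w,a) = d(w,b) + 1`. -/
def IsForwardEqualizedPair {α : Type*} (G : SimpleGraph α) (X Y : Set α) : Prop :=
  X ∪ Y = Set.univ ∧
  ∀ ⦃a⦄, a ∈ X \ Y → ∀ ⦃b⦄, b ∈ Y \ X → ∃ w, G.dist w a = G.dist w b + 1

/-- `β*(G)`: the minimum of `|X ∩ Y|` over all pairs of vertex covers `X, Y` of the
empty bisector graph of `G` such that `(X, Y)` is a forward-equalized pair of `G`. -/
noncomputable def betaStar {α : Type*} (G : SimpleGraph α) : ℕ :=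
  sInf {n | ∃ X Y : Set α,
    IsVertexCover (emptyBisector G) X ∧ IsVertexCover (emptyBisector G) Y ∧
    IsForwardEqualizedPair G X Y ∧ (X ∩ Y).ncard = n}

/-- The corona product `G ⊙ H`: one copy of `H` for each vertex `i` of `G` (the vertices
`Sum.inr (i, w)`), with `i` joined to every vertex of its copy. -/
def corona (G : SimpleGraph V) (H : SimpleGraph W) : SimpleGraph (V ⊕ V × W) where
  Adj x y :=
    match x, y with
    | Sum.inl a, Sum.inl b => G.Adj a b
    | Sum.inl a, Sum.inr p => a = p.1
    | Sum.inr p, Sum.inl a => a = p.1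
    | Sum.inr p, Sum.inr q => p.1 = q.1 ∧ H.Adj p.2 q.2
  symm := ⟨by
    rintro (a | p) (b | q) h
    · exact h.symm
    · exact h
    · exact h
    · exact ⟨h.1.symm, h.2.symm⟩⟩
  loopless := ⟨by
    rintro (a | p) h
    · exact G.irrefl h
    · exact H.irrefl h.2⟩

/-!
Every vertex `s` of `G ⊙ H` outside the copy `H_v` reaches `H_v` only through `v`, so
`d(s, h) = d(s, v) + 1` for every `h ∈ V(H_v)`; and `d(s, u) = d_G(s̄, u) + [s ∉ V(G)]` for
`u ∈ V(G)`, where `s̄` is the vertex of `G` below `s`. Hence a vertex of `G ⊙ H` equidistant from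
`u, v ∈ V(G)`, or from `h ∈ V(H_u)` and `h' ∈ V(H_v)` while lying outside `H_u ∪ H_v`, projects to
a vertex of `B_G(u|v)`, so `L(S)` and `U(S)` must meet every edge of `Ĝ`. Finally `v` and a vertex
of `H_v` are never equalized from outside `H_v`, so `v ∈ L(S) ∪ U(S)`.
-/

namespace SimpleGraph

variable {α β : Type*} {G : SimpleGraph α} {G' : SimpleGraph β}

theorem Walk.exists_walk_length_le_of_adj_or_eq (f : α → β)
    (hf : ∀ ⦃x y⦄, G.Adj x y → f x = f y ∨ G'.Adj (f x) (f y)) {x y : α} (p : G.Walk x y) :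
    ∃ q : G'.Walk (f x) (f y), q.length ≤ p.length := by
  induction p with
  | nil => exact ⟨nil, le_rfl⟩
  | cons e p ih =>
    obtain ⟨q, hq⟩ := ih
    rcases hf e with h | h
    · exact ⟨q.copy h.symm rfl, by simp only [length_copy, length_cons]; omega⟩
    · exact ⟨cons h q, by simp only [length_cons]; omega⟩

theorem Reachable.dist_le_of_adj_or_eq (f : α → β)
    (hf : ∀ ⦃x y⦄, G.Adj x y → f x = f y ∨ G'.Adj (f x) (f y)) {x y : α} (h : G.Reachable x y) :
    G'.dist (f x) (f y) ≤ G.dist x y := by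
  obtain ⟨p, hp⟩ := h.exists_walk_length_eq_dist
  obtain ⟨q, hq⟩ := p.exists_walk_length_le_of_adj_or_eq f hf
  exact (dist_le q).trans (hp ▸ hq)

/-- Every edge leaving `A` ends at `c`, so every path from `A` to `y ∉ A` passes through `c`. -/
theorem dist_eq_dist_add_one_of_gateway {A : Set α} {a c y : α}
    (hA : ∀ x ∈ A, ∀ z, G.Adj x z → z ∈ A ∨ z = c) (ha : a ∈ A) (hac : G.Adj a c) (hy : y ∉ A)
    (hcy : G.Reachable c y) : G.dist a y = G.dist c y + 1 := by
  have length_ge : ∀ {x} (p : G.Walk x y), x ∈ A → G.dist c y + 1 ≤ p.length := by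
    intro x p
    induction p with
    | nil => exact fun hx => absurd hx hy
    | cons e p ih =>
      intro hx
      rw [Walk.length_cons]
      rcases hA _ hx _ e with hz | rfl
      · have := ih hy hcy hz; omega
      · have := dist_le p; omega
  obtain ⟨p, hp⟩ := (hac.reachable.trans hcy).exists_walk_length_eq_dist
  refine le_antisymm ?_ (hp ▸ length_ge p ha)
  calc G.dist a y ≤ G.dist a c + G.dist c y := hcy.dist_triangle_right a
    _ = G.dist c y + 1 := by rw [dist_eq_one_iff_adj.mpr hac, add_comm]

end SimpleGraph

section Corona

open SimpleGraph

variable {G : SimpleGraph V} {H : SimpleGraph W}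

def coronaBase : V ⊕ V × W → V := Sum.elim id Prod.fst

theorem corona_adj_base {x y : V ⊕ V × W} (e : (corona G H).Adj x y) :
    coronaBase x = coronaBase y ∨ G.Adj (coronaBase x) (coronaBase y) := by
  rcases x with a | p <;> rcases y with b | q
  · exact Or.inr e
  · exact Or.inl e
  · exact Or.inl (Eq.symm (e : b = p.1))
  · exact Or.inl e.1

theorem corona_reachable_inl_inl (hG : G.Connected) (a b : V) :
    (corona G H).Reachable (Sum.inl a) (Sum.inl b) := by
  obtain ⟨p⟩ := hG.preconnected a b
  obtain ⟨q, -⟩ := p.exists_walk_length_le_of_adj_or_eq (G' := corona G H) Sum.inl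
    fun _ _ h => Or.inr h
  exact ⟨q⟩

theorem corona_connected (hG : G.Connected) : (corona G H).Connected := by
  have to_base : ∀ x : V ⊕ V × W, (corona G H).Reachable (Sum.inl (coronaBase x)) x := by
    rintro (a | ⟨b, w⟩)
    · rfl
    · exact Adj.reachable (show b = b from rfl)
  have := hG.nonempty
  refine ⟨fun x y => ?_⟩
  exact (to_base x).symm.trans ((corona_reachable_inl_inl hG _ _).trans (to_base y))

theorem corona_dist_inl_inl (hG : G.Connected) (a b : V) :
    (corona G H).dist (Sum.inl a) (Sum.inl b) = G.dist a b :=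
  le_antisymm
    ((hG.preconnected a b).dist_le_of_adj_or_eq Sum.inl fun _ _ h => Or.inr h)
    ((corona_reachable_inl_inl hG a b).dist_le_of_adj_or_eq coronaBase
      fun _ _ => corona_adj_base)

theorem corona_dist_inr_of_notMem_copy (hG : G.Connected) {s : V ⊕ V × W} {v : V} (w : W)
    (hs : ∀ w', s ≠ Sum.inr (v, w')) :
    (corona G H).dist s (Sum.inr (v, w)) = (corona G H).dist s (Sum.inl v) + 1 := by
  rw [dist_comm, dist_comm (u := s)]
  refine dist_eq_dist_add_one_of_gateway (A := Set.range fun w' => Sum.inr (v, w')) ?_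
    ⟨w, rfl⟩ rfl (fun ⟨w', h⟩ => hs w' h.symm) (corona_connected hG _ _)
  rintro _ ⟨w', rfl⟩ (a | ⟨b, w''⟩) h
  · exact Or.inr (congrArg Sum.inl (h : a = v))
  · exact Or.inl ⟨w'', by rw [show b = v from h.1.symm]⟩

theorem corona_dist_inr_inl (hG : G.Connected) (b : V) (w : W) (u : V) :
    (corona G H).dist (Sum.inr (b, w)) (Sum.inl u) = G.dist b u + 1 := by
  rw [dist_comm, corona_dist_inr_of_notMem_copy hG w (fun _ => Sum.inl_ne_inr), dist_comm,
    corona_dist_inl_inl hG]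

theorem corona_dist_inl_eq_iff (hG : G.Connected) (s : V ⊕ V × W) (u v : V) :
    (corona G H).dist s (Sum.inl u) = (corona G H).dist s (Sum.inl v) ↔
      coronaBase s ∈ bisector G u v := by
  rcases s with a | ⟨b, w⟩
  · simp only [corona_dist_inl_inl hG]; rfl
  · simp only [corona_dist_inr_inl hG]; exact add_left_inj 1

end Corona

theorem corona_distEqSet_LU_general [Nonempty W]
    (G : SimpleGraph V) (H : SimpleGraph W) (hG : G.Connected)
    (S : Set (V ⊕ V × W)) (hS : IsDistEqSet (corona G H) S) :
    IsVertexCover (emptyBisector G) {v : V | Sum.inl v ∈ S} ∧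
    IsVertexCover (emptyBisector G) {v : V | ∃ w : W, Sum.inr (v, w) ∈ S} ∧
    {v : V | Sum.inl v ∈ S} ∪ {v : V | ∃ w : W, Sum.inr (v, w) ∈ S} = Set.univ := by
  obtain ⟨w⟩ := ‹Nonempty W›
  have notMem_copy : ∀ {v s}, (¬∃ w, Sum.inr (v, w) ∈ S) → s ∈ S → ∀ w', s ≠ Sum.inr (v, w') :=
    fun hv hs w' h => hv ⟨w', h ▸ hs⟩
  refine ⟨fun u v huv => ?_, fun u v huv => ?_, Set.eq_univ_of_forall fun v => ?_⟩
  · by_contra! h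
    obtain ⟨s, -, hs⟩ := hS h.1 h.2 (by simpa using huv.1)
    simpa [huv.2] using (corona_dist_inl_eq_iff hG s u v).mp hs
  · by_contra! h
    obtain ⟨s, hsS, hs⟩ := hS (fun hu => h.1 ⟨w, hu⟩) (fun hv => h.2 ⟨w, hv⟩)
      (by simpa using huv.1)
    rw [corona_dist_inr_of_notMem_copy hG w (notMem_copy h.1 hsS),
      corona_dist_inr_of_notMem_copy hG w (notMem_copy h.2 hsS), add_left_inj] at hs
    simpa [huv.2] using (corona_dist_inl_eq_iff hG s u v).mp hs
  · by_contra! h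
    simp only [Set.mem_union, Set.mem_ofPred_eq, not_or] at h
    obtain ⟨s, hsS, hs⟩ := hS h.1 (fun hv => h.2 ⟨w, hv⟩) Sum.inl_ne_inr
    rw [corona_dist_inr_of_notMem_copy hG w (notMem_copy h.2 hsS)] at hs
    omega

/-- If `S` is a distance-equalizer set of `G ⊙ H`, then
`L(S) = {v | inl v ∈ S}` and `U(S) = {v | V(H_v) ∩ S ≠ ∅}` are vertex covers of the
empty bisector graph `Ĝ`, and `L(S) ∪ U(S) = V(G)`. -/
theorem corona_distEqSet_LU [Fintype V] [Fintype W] [Nonempty W]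
    (G : SimpleGraph V) (H : SimpleGraph W) (hG : G.Connected)
    (S : Set (V ⊕ V × W)) (hS : IsDistEqSet (corona G H) S) :
    IsVertexCover (emptyBisector G) {v : V | Sum.inl v ∈ S} ∧
    IsVertexCover (emptyBisector G) {v : V | ∃ w : W, Sum.inr (v, w) ∈ S} ∧
    {v : V | Sum.inl v ∈ S} ∪ {v : V | ∃ w : W, Sum.inr (v, w) ∈ S} = Set.univ :=
  corona_distEqSet_LU_general G H hG S hS
end

section
/- If G is a finite simple connected bipartite graph with partite sets A and B, then its empty bisector graph Ĝ is the complete bipartite graph with partite sets A and B; that is, two distinct vertices u, v are adjacent in Ĝ if and only if one of them lies in A and the other in B. -/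
universe u v

variable {V : Type u} {W : Type v}

/-!
Colour `A` and `B` with the two values of `Bool`. In a connected graph the parity of `d(u, v)`
records whether `u` and `v` have the same colour. So if `x` and `y` have different colours,
`d(w, x)` and `d(w, y)` have different parities for every `w` and the bisector is empty; if they
have the same colour, `d(x, y)` is even and the midpoint of a shortest `x`–`y` path is equidistant
from both.
-/

namespace SimpleGraph

variable {α : Type*} {G : SimpleGraph α} {u v x y : α}

theorem Reachable.exists_dist_eq_and_dist_eq_sub (h : G.Reachable u v) {k : ℕ}
    (hk : k ≤ G.dist u v) : ∃ w, G.dist u w = k ∧ G.dist w v = G.dist u v - k := by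
  obtain ⟨p, hp⟩ := h.exists_walk_length_eq_dist
  have hle_left : G.dist u (p.getVert k) ≤ k :=
    (dist_le (p.take k)).trans (p.take_length k ▸ min_le_left k p.length)
  have hle_right : G.dist (p.getVert k) v ≤ G.dist u v - k := by
    simpa [p.drop_length, hp] using dist_le (p.drop k)
  have htri : G.dist u v ≤ G.dist u (p.getVert k) + G.dist (p.getVert k) v :=
    Reachable.dist_triangle_left ⟨p.take k⟩ v
  exact ⟨p.getVert k, by omega, by omega⟩

theorem bisector_nonempty_of_even_dist (h : G.Reachable x y) (he : Even (G.dist x y)) :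
    (bisector G x y).Nonempty := by
  obtain ⟨m, hm⟩ := he
  obtain ⟨w, hxw, hwy⟩ := h.exists_dist_eq_and_dist_eq_sub (k := m) (by omega)
  refine ⟨w, ?_⟩
  change G.dist w x = G.dist w y
  rw [dist_comm, hxw, hwy]
  omega

theorem Coloring.even_dist_iff (c : G.Coloring Bool) (h : G.Reachable u v) :
    Even (G.dist u v) ↔ (c u ↔ c v) := by
  obtain ⟨p, hp⟩ := h.exists_walk_length_eq_dist
  exact hp ▸ c.even_length_iff_congr p

theorem Coloring.bisector_eq_empty (hG : G.Connected) (c : G.Coloring Bool) (h : c x ≠ c y) :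
    bisector G x y = ∅ := by
  refine Set.eq_empty_iff_forall_notMem.mpr fun w (hw : G.dist w x = G.dist w y) => h ?_
  have hx := c.even_dist_iff (hG w x)
  have hy := c.even_dist_iff (hG w y)
  rw [hw, hy] at hx
  exact Bool.eq_iff_iff.mpr (by tauto)

theorem Coloring.emptyBisector_adj_iff (hG : G.Connected) (c : G.Coloring Bool) (hxy : x ≠ y) :
    (emptyBisector G).Adj x y ↔ c x ≠ c y := by
  refine ⟨fun ⟨_, hempty⟩ hc => ?_, fun hc => ⟨hxy, c.bisector_eq_empty hG hc⟩⟩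
  have heven : Even (G.dist x y) := (c.even_dist_iff (hG x y)).mpr (Bool.eq_iff_iff.mp hc)
  exact (bisector_nonempty_of_even_dist (hG x y) heven).ne_empty hempty

end SimpleGraph

section IndepSets

open Classical

variable {α : Type*} {G : SimpleGraph α} {A B : Set α}

noncomputable def boolColoringOfIndepSets (hUnion : A ∪ B = Set.univ)
    (hA : IsIndepSet G A) (hB : IsIndepSet G B) : G.Coloring Bool :=
  SimpleGraph.Coloring.mk (fun v => decide (v ∈ A)) fun {u v} huv hc => by
    have mem_B : ∀ z, z ∉ A → z ∈ B := fun z hz =>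
      ((Set.mem_union z A B).mp (hUnion ▸ Set.mem_univ z)).resolve_left hz
    by_cases hu : u ∈ A
    · exact hA hu (by simpa [hu] using hc) huv
    · exact hB (mem_B u hu) (mem_B v (by simpa [hu] using hc)) huv

@[simp]
theorem boolColoringOfIndepSets_apply (hUnion : A ∪ B = Set.univ) (hA : IsIndepSet G A)
    (hB : IsIndepSet G B) (v : α) :
    boolColoringOfIndepSets hUnion hA hB v = decide (v ∈ A) :=
  rfl

end IndepSets

theorem emptyBisector_of_bipartite_general
    (G : SimpleGraph V) (hG : G.Connected)
    (A B : Set V) (hUnion : A ∪ B = Set.univ) (hDisj : Disjoint A B)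
    (hA : IsIndepSet G A) (hB : IsIndepSet G B) :
    ∀ x y : V, x ≠ y →
      ((emptyBisector G).Adj x y ↔ ((x ∈ A ∧ y ∈ B) ∨ (x ∈ B ∧ y ∈ A))) := by
  intro x y hxy
  rw [(boolColoringOfIndepSets hUnion hA hB).emptyBisector_adj_iff hG hxy]
  obtain rfl : Aᶜ = B := (IsCompl.of_eq hDisj.eq_bot hUnion).compl_eq
  simp only [boolColoringOfIndepSets_apply, ne_eq, decide_eq_decide, Set.mem_compl_iff]
  tauto

/-- If `G` is connected and bipartite with partite sets `A`, `B`, then its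
empty bisector graph is the complete bipartite graph with partite sets `A` and `B`. -/
theorem emptyBisector_of_bipartite [Fintype V]
    (G : SimpleGraph V) (hG : G.Connected)
    (A B : Set V) (hUnion : A ∪ B = Set.univ) (hDisj : Disjoint A B)
    (hA : IsIndepSet G A) (hB : IsIndepSet G B) :
    ∀ x y : V, x ≠ y →
      ((emptyBisector G).Adj x y ↔ ((x ∈ A ∧ y ∈ B) ∨ (x ∈ B ∧ y ∈ A))) :=
  emptyBisector_of_bipartite_general G hG A B hUnion hDisj hA hB
end
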